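/- Let G be a group that is nilpotent of class at most 3 (i.e. every triple commutator ⁅⁅x,y⁆,z⁆ lies in the center Z(G)). Then for all x, y, z ∈ G the loop commutator of the associated gyrogroup satisfies °⁅°⁅x,y⁆, z⁆ = ⁅⁅x,y⁆,z⁆⁹ and °⁅x, °⁅y,z⁆⁆ = ⁅x,⁅y,z⁆⁆⁹. Consequently, the loop commutator operation is associative (°⁅°⁅x,y⁆,z⁆ = °⁅x,°⁅y,z⁆⁆ for all x,y,z) if and only if ⁅⁅x,y⁆,z⁆⁹ = ⁅x,⁅y,z⁆⁆⁹ for all x,y,z ∈ G. -/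

import Mathlib

/-- The gyrogroup operation associated with a group: `x ∘ y = y⁻¹ * x * y²`. -/
def gyrOp {G : Type*} [Group G] (x y : G) : G := y⁻¹ * x * y ^ 2

/-- The loop commutator of the associated gyrogroup:
`°⁅x,y⁆ = (y∘x)·(x∘y)·(y∘x)⁻²`. -/
def loopComm {G : Type*} [Group G] (x y : G) : G :=
  gyrOp y x * gyrOp x y * (gyrOp y x ^ 2)⁻¹

open scoped commutatorElement

/-! If `d = ⁅a, b⁆` commutes with `a` and `b`, then `a ∘ b = d³ · (b ∘ a)`, whence `°⁅a, b⁆ = d³`.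
In class at most 3 this holds modulo the centre, so `°⁅x, y⁆ = ⁅x, y⁆³ t` with `t` central.
The word defining `°⁅·,·⁆` has exponent sum zero in each argument, so a central factor drops
out: `°⁅°⁅x, y⁆, z⁆ = °⁅⁅x, y⁆³, z⁆ = ⁅⁅x, y⁆³, z⁆³`, and `⁅⁅x, y⁆³, z⁆ = ⁅⁅x, y⁆, z⁆³` because
`⁅⁅x, y⁆, z⁆` is central. -/

section

variable {G H : Type*} [Group G] [Group H]

theorem map_gyrOp (f : G →* H) (x y : G) : f (gyrOp x y) = gyrOp (f x) (f y) := by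
  simp only [gyrOp, map_mul, map_inv, map_pow]

theorem map_loopComm (f : G →* H) (x y : G) : f (loopComm x y) = loopComm (f x) (f y) := by
  simp only [loopComm, map_gyrOp, map_mul, map_inv, map_pow]

theorem commutatorElement_pow_left {c z : G} (h : Commute ⁅c, z⁆ c) (n : ℕ) :
    ⁅c ^ n, z⁆ = ⁅c, z⁆ ^ n := by
  induction n with
  | zero => simp
  | succ n ih =>
    calc ⁅c ^ (n + 1), z⁆ = c * ⁅c ^ n, z⁆ * c⁻¹ * ⁅c, z⁆ := by
          simp only [commutatorElement_def, pow_succ']; group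
      _ = ⁅c, z⁆ ^ (n + 1) := by
          rw [ih, (h.pow_left n).symm.mul_inv_cancel, pow_succ]

theorem commutatorElement_pow_right {c z : G} (h : Commute ⁅z, c⁆ c) (n : ℕ) :
    ⁅z, c ^ n⁆ = ⁅z, c⁆ ^ n := by
  have h' : Commute ⁅c, z⁆ c := by rw [← commutatorElement_inv]; exact h.inv_left
  rw [← commutatorElement_inv, commutatorElement_pow_left h', ← inv_pow, commutatorElement_inv]

theorem gyrOp_eq_commutatorElement_pow_three_mul {a b : G} (ha : Commute ⁅a, b⁆ a)
    (hb : Commute ⁅a, b⁆ b) : gyrOp a b = ⁅a, b⁆ ^ 3 * gyrOp b a := by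
  have hab : a * b = ⁅a, b⁆ * (b * a) := by rw [commutatorElement_def]; group
  generalize ⁅a, b⁆ = d at ha hb hab ⊢
  have hba : b * a = d⁻¹ * (a * b) := by rw [hab]; group
  have h₁ : gyrOp a b = d * (a * b) :=
    calc gyrOp a b = b⁻¹ * (a * b) * b := by rw [gyrOp, sq]; group
      _ = b⁻¹ * (d * (b * a)) * b := by rw [hab]
      _ = b⁻¹ * d * b * (a * b) := by group
      _ = d * (a * b) := by rw [hb.symm.inv_mul_cancel]
  have h₂ : gyrOp b a = d⁻¹ * (b * a) :=
    calc gyrOp b a = a⁻¹ * (b * a) * a := by rw [gyrOp, sq]; group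
      _ = a⁻¹ * (d⁻¹ * (a * b)) * a := by rw [hba]
      _ = a⁻¹ * d⁻¹ * a * (b * a) := by group
      _ = d⁻¹ * (b * a) := by rw [ha.inv_left.symm.inv_mul_cancel]
  rw [h₁, h₂, hab, pow_three]
  group

theorem loopComm_eq_commutatorElement_pow_three {a b : G} (ha : Commute ⁅a, b⁆ a)
    (hb : Commute ⁅a, b⁆ b) : loopComm a b = ⁅a, b⁆ ^ 3 := by
  have hP : Commute (⁅a, b⁆ ^ 3) (gyrOp b a) :=
    ((ha.inv_right.mul_right hb).mul_right (ha.pow_right 2)).pow_left 3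
  calc loopComm a b = ⁅a, b⁆ ^ 3 * gyrOp b a ^ 2 * (gyrOp b a ^ 2)⁻¹ := by
        rw [loopComm, gyrOp_eq_commutatorElement_pow_three_mul ha hb, ← mul_assoc, ← hP.eq,
          mul_assoc _ (gyrOp b a) (gyrOp b a), ← sq]
    _ = ⁅a, b⁆ ^ 3 := mul_inv_cancel_right _ _

theorem Commute.gyrOp_right {t x y : G} (hx : Commute t x) (hy : Commute t y) :
    Commute t (gyrOp x y) :=
  (hy.inv_right.mul_right hx).mul_right (hy.pow_right 2)

theorem gyrOp_mul_left {v z t : G} (hz : Commute t z) : gyrOp (v * t) z = gyrOp v z * t := by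
  rw [gyrOp, gyrOp, ← mul_assoc, mul_assoc _ t, (hz.pow_right 2).eq, ← mul_assoc]

theorem gyrOp_mul_right {v z t : G} (hv : Commute t v) (hz : Commute t z) :
    gyrOp z (v * t) = gyrOp z v * t := by
  calc gyrOp z (v * t) = t⁻¹ * gyrOp z v * t * t := by
        rw [gyrOp, gyrOp, hv.symm.mul_pow, mul_inv_rev, sq t]; simp only [mul_assoc]
    _ = gyrOp z v * t := by rw [(hz.gyrOp_right hv).inv_mul_cancel]

theorem mul_mul_mul_sq_inv {P Q t : G} (hP : Commute t P) (hQ : Commute t Q) :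
    P * t * (Q * t) * ((P * t) ^ 2)⁻¹ = P * Q * (P ^ 2)⁻¹ :=
  calc P * t * (Q * t) * ((P * t) ^ 2)⁻¹ = P * Q * t ^ 2 * (t ^ 2)⁻¹ * (P ^ 2)⁻¹ := by
        rw [hP.symm.mul_pow, mul_inv_rev, sq t]; simp only [mul_assoc, hQ.left_comm]
    _ = P * Q * (P ^ 2)⁻¹ := by rw [mul_inv_cancel_right]

theorem loopComm_mul_left {v z t : G} (hv : Commute t v) (hz : Commute t z) :
    loopComm (v * t) z = loopComm v z := by
  rw [loopComm, loopComm, gyrOp_mul_left hz, gyrOp_mul_right hv hz,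
    mul_mul_mul_sq_inv (hz.gyrOp_right hv) (hv.gyrOp_right hz)]

theorem loopComm_mul_right {x v t : G} (hx : Commute t x) (hv : Commute t v) :
    loopComm x (v * t) = loopComm x v := by
  rw [loopComm, loopComm, gyrOp_mul_left hx, gyrOp_mul_right hv hx,
    mul_mul_mul_sq_inv (hv.gyrOp_right hx) (hx.gyrOp_right hv)]

theorem loopComm_mk_eq_mk_commutatorElement_pow_three {N : Subgroup G} [N.Normal]
    (hN : ∀ x y z : G, ⁅⁅x, y⁆, z⁆ ∈ N) (x y : G) :
    (loopComm x y : G ⧸ N) = (⁅x, y⁆ ^ 3 : G) := by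
  have hcomm (u v w : G ⧸ N) : Commute ⁅u, v⁆ w := by
    induction u using QuotientGroup.induction_on
    induction v using QuotientGroup.induction_on
    induction w using QuotientGroup.induction_on
    rw [← commutatorElement_eq_one_iff_commute]
    exact (QuotientGroup.eq_one_iff _).mpr (hN _ _ _)
  calc (loopComm x y : G ⧸ N) = loopComm (x : G ⧸ N) y := map_loopComm (QuotientGroup.mk' N) x y
    _ = ⁅(x : G ⧸ N), (y : G ⧸ N)⁆ ^ 3 :=
        loopComm_eq_commutatorElement_pow_three (hcomm _ _ _) (hcomm _ _ _)
    _ = (⁅x, y⁆ ^ 3 : G) := by rw [QuotientGroup.mk_pow]; rfl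

theorem exists_loopComm_eq_mul_central (h3 : ∀ x y z : G, ⁅⁅x, y⁆, z⁆ ∈ Subgroup.center G)
    (x y : G) : ∃ t ∈ Subgroup.center G, loopComm x y = ⁅x, y⁆ ^ 3 * t :=
  ⟨_, QuotientGroup.eq.mp (loopComm_mk_eq_mk_commutatorElement_pow_three h3 x y).symm,
    (mul_inv_cancel_left _ _).symm⟩

theorem loopComm_loopComm_left (h3 : ∀ x y z : G, ⁅⁅x, y⁆, z⁆ ∈ Subgroup.center G)
    (x y z : G) : loopComm (loopComm x y) z = ⁅⁅x, y⁆, z⁆ ^ 9 := by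
  obtain ⟨t, ht, hxy⟩ := exists_loopComm_eq_mul_central h3 x y
  have hpow : ⁅⁅x, y⁆ ^ 3, z⁆ = ⁅⁅x, y⁆, z⁆ ^ 3 := commutatorElement_pow_left ((h3 x y z).comm _) 3
  have hcen : ⁅⁅x, y⁆ ^ 3, z⁆ ∈ Subgroup.center G := hpow ▸ pow_mem (h3 x y z) 3
  rw [hxy, loopComm_mul_left (ht.comm _) (ht.comm _),
    loopComm_eq_commutatorElement_pow_three (hcen.comm _) (hcen.comm _), hpow, ← pow_mul]

theorem loopComm_loopComm_right (h3 : ∀ x y z : G, ⁅⁅x, y⁆, z⁆ ∈ Subgroup.center G)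
    (x y z : G) : loopComm x (loopComm y z) = ⁅x, ⁅y, z⁆⁆ ^ 9 := by
  obtain ⟨t, ht, hyz⟩ := exists_loopComm_eq_mul_central h3 y z
  have hcen₁ : ⁅x, ⁅y, z⁆⁆ ∈ Subgroup.center G := by
    rw [← commutatorElement_inv]; exact inv_mem (h3 y z x)
  have hpow : ⁅x, ⁅y, z⁆ ^ 3⁆ = ⁅x, ⁅y, z⁆⁆ ^ 3 := commutatorElement_pow_right (hcen₁.comm _) 3
  have hcen : ⁅x, ⁅y, z⁆ ^ 3⁆ ∈ Subgroup.center G := hpow ▸ pow_mem hcen₁ 3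
  rw [hyz, loopComm_mul_right (ht.comm _) (ht.comm _),
    loopComm_eq_commutatorElement_pow_three (hcen.comm _) (hcen.comm _), hpow, ← pow_mul]

end

theorem loopComm_assoc_iff {G : Type*} [Group G]
    (h3 : ∀ x y z : G, ⁅⁅x, y⁆, z⁆ ∈ Subgroup.center G) :
    (∀ x y z : G, loopComm (loopComm x y) z = ⁅⁅x, y⁆, z⁆ ^ 9 ∧
      loopComm x (loopComm y z) = ⁅x, ⁅y, z⁆⁆ ^ 9) ∧
    ((∀ x y z : G, loopComm (loopComm x y) z = loopComm x (loopComm y z)) ↔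
      (∀ x y z : G, ⁅⁅x, y⁆, z⁆ ^ 9 = ⁅x, ⁅y, z⁆⁆ ^ 9)) := by
  refine ⟨fun x y z => ⟨loopComm_loopComm_left h3 x y z, loopComm_loopComm_right h3 x y z⟩, ?_⟩
  simp only [loopComm_loopComm_left h3, loopComm_loopComm_right h3]
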